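/- Let q ≥ 2 be real, κ ≥ 1 an integer, η ∈ {0, 1}, and α_1, …, α_κ ∈ ℂ with |α_j| = 1 for all j, and set L(s) = (1 − q^{−s})^η·∏_{j=1}^κ (1 − α_j·q^{1/2−s}). There is a constant C = C(q), independent of κ, η and the α_j, such that for every real σ0 > 1/2 and every t ∈ ℝ with L(1/2 + it) ≠ 0: log|L(1/2 + it)| ≤ log|L(σ0 + it)| + (κ/2)·(σ0 − 1/2)·log q + C. -/

import Mathlib

/-!
On the critical line every factor `1 - α_j q^{1/2-s}` has the form `1 - x` with `|x| = 1`, and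
moving to `σ0 + it` replaces `x` by `r x` with `r = q^{-(σ0 - 1/2)}`. The identity
`|1 - r x|² - r |1 - x|² = (1 - r)²` gives `|1 - x| ≤ r^{-1/2} |1 - r x|`, which costs
`(σ0 - 1/2)/2 · log q` per factor. The factor `(1 - q^{-s})^η` lies between `1 - q^{-1/2}` and `2`
in absolute value for `Re s ≥ 1/2`, which yields the constant `C = log (2 / (1 - q^{-1/2}))`.
-/

open scoped Classical BigOperators

noncomputable section

/-- The polynomial L-function `L(s) = (1 - q^{-s})^η · ∏_{j=1}^κ (1 - α_j q^{1/2-s})`. -/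
def Lprod (q : ℝ) (κ η : ℕ) (α : Fin κ → ℂ) (s : ℂ) : ℂ :=
  (1 - (q : ℂ) ^ (-s)) ^ η * ∏ j, (1 - α j * (q : ℂ) ^ ((1 : ℂ) / 2 - s))

theorem mul_sq_norm_sub_le_sq_norm_sub_smul {F : Type*} [NormedAddCommGroup F]
    [InnerProductSpace ℝ F] {u x : F} (hu : ‖u‖ = 1) (hx : ‖x‖ = 1) (r : ℝ) :
    r * ‖u - x‖ ^ 2 ≤ ‖u - r • x‖ ^ 2 := by
  rw [norm_sub_sq_real, norm_sub_sq_real, real_inner_smul_right, norm_smul, hu, hx,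
    Real.norm_eq_abs, mul_one, sq_abs]
  nlinarith [sq_nonneg (1 - r)]

theorem norm_one_sub_le_rpow_mul {q : ℝ} (hq : 0 < q) {x : ℂ} (hx : ‖x‖ = 1) (δ : ℝ) :
    ‖1 - x‖ ≤ q ^ (δ / 2) * ‖1 - (q ^ (-δ) : ℝ) * x‖ := by
  have hsq : (q ^ (δ / 2)) ^ 2 * q ^ (-δ) = 1 := by
    rw [← Real.rpow_natCast, ← Real.rpow_mul hq.le, ← Real.rpow_add hq]
    norm_num
  have key := mul_sq_norm_sub_le_sq_norm_sub_smul (norm_one : ‖(1 : ℂ)‖ = 1) hx (q ^ (-δ))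
  rw [Complex.real_smul] at key
  refine (pow_le_pow_iff_left₀ (norm_nonneg _) (by positivity) two_ne_zero).mp ?_
  calc ‖1 - x‖ ^ 2 = (q ^ (δ / 2)) ^ 2 * (q ^ (-δ) * ‖1 - x‖ ^ 2) := by
        rw [← mul_assoc, hsq, one_mul]
    _ ≤ (q ^ (δ / 2)) ^ 2 * ‖1 - (q ^ (-δ) : ℝ) * x‖ ^ 2 := by gcongr
    _ = _ := (mul_pow _ _ _).symm

section Lprod

variable {q : ℝ} {s : ℂ}

theorem cpow_half_sub_add_ofReal (hq : 0 < q) (s : ℂ) (δ : ℝ) :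
    (q : ℂ) ^ ((1 : ℂ) / 2 - (s + δ)) = (q ^ (-δ) : ℝ) * (q : ℂ) ^ ((1 : ℂ) / 2 - s) := by
  rw [Complex.ofReal_cpow hq.le, ← Complex.cpow_add _ _ (by exact_mod_cast hq.ne')]
  push_cast
  ring_nf

theorem norm_mul_cpow_half_sub (hq : 0 < q) {a : ℂ} (ha : ‖a‖ = 1) (hs : s.re = 1 / 2) :
    ‖a * (q : ℂ) ^ ((1 : ℂ) / 2 - s)‖ = 1 := by
  rw [norm_mul, ha, Complex.norm_cpow_eq_rpow_re_of_pos hq]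
  simp [hs]

theorem norm_prod_one_sub_mul_cpow_le (hq : 0 < q) {κ : ℕ} {α : Fin κ → ℂ}
    (hα : ∀ j, ‖α j‖ = 1) (hs : s.re = 1 / 2) (δ : ℝ) :
    ‖∏ j, (1 - α j * (q : ℂ) ^ ((1 : ℂ) / 2 - s))‖
      ≤ (q ^ (δ / 2)) ^ κ * ‖∏ j, (1 - α j * (q : ℂ) ^ ((1 : ℂ) / 2 - (s + δ)))‖ := by
  simp only [norm_prod, cpow_half_sub_add_ofReal hq, mul_left_comm (α _)]
  calc ∏ j, ‖1 - α j * (q : ℂ) ^ ((1 : ℂ) / 2 - s)‖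
      ≤ ∏ j, q ^ (δ / 2) * ‖1 - (q ^ (-δ) : ℝ) * (α j * (q : ℂ) ^ ((1 : ℂ) / 2 - s))‖ :=
        Finset.prod_le_prod (fun _ _ ↦ norm_nonneg _)
          fun j _ ↦ norm_one_sub_le_rpow_mul hq (norm_mul_cpow_half_sub hq (hα j) hs) δ
    _ = _ := by rw [Finset.prod_mul_distrib, Finset.prod_const, Finset.card_univ, Fintype.card_fin]

theorem norm_one_sub_cpow_neg_le_two (hq : 1 ≤ q) (hs : 0 ≤ s.re) :
    ‖1 - (q : ℂ) ^ (-s)‖ ≤ 2 := by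
  have h : ‖(q : ℂ) ^ (-s)‖ ≤ 1 := by
    rw [Complex.norm_cpow_eq_rpow_re_of_pos (by linarith)]
    exact Real.rpow_le_one_of_one_le_of_nonpos hq (by simpa using hs)
  linarith [norm_sub_le (1 : ℂ) ((q : ℂ) ^ (-s)), norm_one (α := ℂ)]

theorem one_sub_rpow_le_norm_one_sub_cpow_neg (hq : 1 ≤ q) (hs : 1 / 2 ≤ s.re) :
    1 - q ^ (-(1 / 2) : ℝ) ≤ ‖1 - (q : ℂ) ^ (-s)‖ := by
  have h : ‖(q : ℂ) ^ (-s)‖ ≤ q ^ (-(1 / 2) : ℝ) := by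
    rw [Complex.norm_cpow_eq_rpow_re_of_pos (by linarith)]
    exact Real.rpow_le_rpow_of_exponent_le hq (by simpa using hs)
  linarith [norm_sub_norm_le (1 : ℂ) ((q : ℂ) ^ (-s)), norm_one (α := ℂ)]

theorem one_sub_rpow_neg_half_pos (hq : 1 < q) : 0 < 1 - q ^ (-(1 / 2) : ℝ) := by
  linarith [Real.rpow_lt_one_of_one_lt_of_neg hq (by norm_num : -(1 / 2) < (0 : ℝ))]

theorem norm_pow_one_sub_cpow_neg_le (hq : 1 < q) {η : ℕ} (hη : η ≤ 1) (hs : s.re = 1 / 2)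
    {δ : ℝ} (hδ : 0 ≤ δ) :
    ‖(1 - (q : ℂ) ^ (-s)) ^ η‖
      ≤ 2 / (1 - q ^ (-(1 / 2) : ℝ)) * ‖(1 - (q : ℂ) ^ (-(s + δ))) ^ η‖ := by
  have hgap := one_sub_rpow_neg_half_pos hq
  interval_cases η
  · rw [pow_zero, pow_zero, norm_one, mul_one, le_div_iff₀ hgap]
    linarith [Real.rpow_pos_of_pos (by linarith : 0 < q) (-(1 / 2) : ℝ)]
  · have hupper := norm_one_sub_cpow_neg_le_two hq.le (s := s) (by linarith)
    have hlower := one_sub_rpow_le_norm_one_sub_cpow_neg hq.le (s := s + δ) (by simp [hs, hδ])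
    rw [pow_one, pow_one, div_mul_eq_mul_div, le_div_iff₀ hgap]
    nlinarith

theorem norm_Lprod_le (hq : 1 < q) {κ η : ℕ} (hη : η ≤ 1) {α : Fin κ → ℂ}
    (hα : ∀ j, ‖α j‖ = 1) (hs : s.re = 1 / 2) {δ : ℝ} (hδ : 0 ≤ δ) :
    ‖Lprod q κ η α s‖
      ≤ 2 / (1 - q ^ (-(1 / 2) : ℝ)) * (q ^ (δ / 2)) ^ κ * ‖Lprod q κ η α (s + δ)‖ := by
  have hgap := one_sub_rpow_neg_half_pos hq
  rw [Lprod, Lprod, norm_mul, norm_mul, mul_mul_mul_comm]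
  exact mul_le_mul (norm_pow_one_sub_cpow_neg_le hq hη hs hδ)
    (norm_prod_one_sub_mul_cpow_le (by linarith) hα hs δ) (norm_nonneg _) (by positivity)

end Lprod

theorem Real.log_le_log_add_log_of_le_mul {x y K : ℝ} (hx : 0 < x) (hK : 0 < K)
    (h : x ≤ K * y) : Real.log x ≤ Real.log y + Real.log K := by
  have hy : 0 < y := pos_of_mul_pos_right (hx.trans_le h) hK.le
  rw [← Real.log_mul hy.ne' hK.ne', mul_comm]
  exact Real.log_le_log hx h

/-- the drop of `log|L|` from `σ0 + it` to the critical line is at least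
`-(κ/2)(σ0 - 1/2)log q - C`, uniformly in the configuration of zeros. -/
theorem statement19 (q : ℝ) (hq : 2 ≤ q) :
    ∃ C : ℝ, ∀ κ : ℕ, 1 ≤ κ → ∀ η : ℕ, η = 0 ∨ η = 1 →
      ∀ α : Fin κ → ℂ, (∀ j, ‖α j‖ = 1) →
      ∀ σ0 : ℝ, 1 / 2 < σ0 → ∀ t : ℝ,
      Lprod q κ η α ((1 : ℂ) / 2 + (t : ℂ) * Complex.I) ≠ 0 →
      Real.log ‖Lprod q κ η α ((1 : ℂ) / 2 + (t : ℂ) * Complex.I)‖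
        ≤ Real.log ‖Lprod q κ η α ((σ0 : ℂ) + (t : ℂ) * Complex.I)‖
          + (κ : ℝ) / 2 * (σ0 - 1 / 2) * Real.log q + C := by
  refine ⟨Real.log (2 / (1 - q ^ (-(1 / 2) : ℝ))), ?_⟩
  intro κ _ η hη α hα σ0 hσ0 t hL
  have hq1 : 1 < q := by linarith
  set s : ℂ := (1 : ℂ) / 2 + (t : ℂ) * Complex.I
  have hs : s.re = 1 / 2 := by simp [s]
  have hshift : (σ0 : ℂ) + (t : ℂ) * Complex.I = s + ((σ0 - 1 / 2 : ℝ) : ℂ) := by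
    push_cast [s]; ring
  have hbound := norm_Lprod_le hq1 (η := η) (by omega) hα hs (δ := σ0 - 1 / 2) (by linarith)
  have hgap := one_sub_rpow_neg_half_pos hq1
  have hlog := Real.log_le_log_add_log_of_le_mul (norm_pos_iff.mpr hL) (by positivity) hbound
  rw [Real.log_mul (by positivity) (by positivity), Real.log_pow,
    Real.log_rpow (by linarith)] at hlog
  rw [hshift]
  linarith

end
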